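/- arXiv:1506.07406 — 6 statements merged into one kernel-verified Lean document; each statement's English description precedes it below -/
import Mathlib

section
/- Let f₀ : (a,b) → ℝ be continuous and let (f₀, …, f_N) be a Sturm sequence for f₀ in (a,b). Then for a < c < d < b, the number of distinct real zeros of f₀ in the interval (c, d] equals v(f, c) − v(f, d), where v(f, x) is the number of sign variations in the tuple (f₀(x), …, f_N(x)). -/
/-- Number of sign variations of a tuple of reals (zeros removed). -/
noncomputable def signVar (l : List ℝ) : ℕ :=
  let l' := l.filter (fun x => decide (x ≠ 0))
  (l'.zip l'.tail).countP (fun q => decide (q.1 * q.2 < 0))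

/-- Heindel's notion of a Sturm sequence for `f 0` on `(a,b)`. -/
def IsSturmSequence (a b : ℝ) (N : ℕ) (f : ℕ → ℝ → ℝ) : Prop :=
  (∀ i ≤ N, ContinuousOn (f i) (Set.Ioo a b)) ∧
  (∀ y ∈ Set.Ioo a b, f 0 y = 0 →
    ∃ ε > 0, Set.Ioo (y - ε) (y + ε) ⊆ Set.Ioo a b ∧
      (∀ x ∈ Set.Ioo (y - ε) (y + ε), x ≠ y → f 1 x ≠ 0) ∧
      (∀ x, y - ε < x → x < y → f 0 x * f 1 x < 0) ∧
      (∀ x, y < x → x < y + ε → f 0 x * f 1 x > 0)) ∧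
  (∀ i, 1 ≤ i → i + 1 ≤ N → ∀ x ∈ Set.Ioo a b, f i x = 0 →
      f (i - 1) x * f (i + 1) x < 0) ∧
  (∀ x ∈ Set.Ioo a b, f N x ≠ 0)

/-!
Let `V x` be the number of sign variations of `(f₀ x, …, f_N x)`. An interior zero of some `fᵢ`
sits between two entries of opposite signs, and these signs persist near `x`; whatever sign `fᵢ`
takes nearby, that stretch contributes exactly one variation. So `V` is locally constant away from
the zeros of `f₀`, and at a zero `y` of `f₀` the same argument applies to `(f₁, …, f_N)`, while the
product `f₀ f₁` passes from negative to positive: `V` drops by exactly one as `x` crosses `y`.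
Hence `V x + #{zeros of f₀ in (c, x]}` is locally constant, so constant, on `[c, d]`.
-/

open Set Filter Topology

lemma signVar_zero_cons (l : List ℝ) : signVar (0 :: l) = signVar l := by
  simp [signVar]

lemma signVar_cons_zero_cons (a : ℝ) (l : List ℝ) : signVar (a :: 0 :: l) = signVar (a :: l) := by
  simp [signVar, List.filter_cons]

lemma signVar_singleton (a : ℝ) : signVar [a] = 0 := by
  by_cases h : a = 0 <;> simp [signVar, h]

lemma signVar_cons_cons {a b : ℝ} (ha : a ≠ 0) (hb : b ≠ 0) (l : List ℝ) :
    signVar (a :: b :: l) = signVar (b :: l) + if a * b < 0 then 1 else 0 := by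
  simp [signVar, ha, hb, List.countP_cons]

lemma signVar_cons_cons_of_mul_neg {a b : ℝ} (h : a * b < 0) (l : List ℝ) :
    signVar (a :: b :: l) = signVar (b :: l) + 1 := by
  rw [signVar_cons_cons (left_ne_zero_of_mul h.ne) (right_ne_zero_of_mul h.ne), if_pos h]

lemma signVar_cons_cons_of_mul_pos {a b : ℝ} (h : 0 < a * b) (l : List ℝ) :
    signVar (a :: b :: l) = signVar (b :: l) := by
  rw [signVar_cons_cons (left_ne_zero_of_mul h.ne') (right_ne_zero_of_mul h.ne'),
    if_neg h.not_gt, add_zero]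

inductive SignAdmissible : List ℝ → Prop
  | singleton {a : ℝ} : a ≠ 0 → SignAdmissible [a]
  | cons {a b : ℝ} {l : List ℝ} : a ≠ 0 → b ≠ 0 → SignAdmissible (b :: l) →
      SignAdmissible (a :: b :: l)
  | cons_zero {a c : ℝ} {l : List ℝ} : a * c < 0 → SignAdmissible (c :: l) →
      SignAdmissible (a :: 0 :: c :: l)

lemma mul_mul_mul_pos_of_mul_pos {a a' b b' : ℝ} (ha : 0 < a * a') (hb : 0 < b * b') :
    0 < (a * b) * (a' * b') := by
  have := mul_pos ha hb
  linarith [show a * b * (a' * b') = a * a' * (b * b') by ring]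

theorem SignAdmissible.signVar_eq {u : List ℝ} (hu : SignAdmissible u) {w : List ℝ}
    (huw : List.Forall₂ (fun p q => p ≠ 0 → 0 < p * q) u w) : signVar w = signVar u := by
  induction hu generalizing w with
  | singleton =>
    obtain ⟨_, _, -, hnil, rfl⟩ := List.forall₂_cons_left_iff.1 huw
    rw [List.forall₂_nil_left_iff.1 hnil, signVar_singleton, signVar_singleton]
  | cons ha hb _ ih =>
    obtain ⟨a', _, haa, hb', rfl⟩ := List.forall₂_cons_left_iff.1 huw
    obtain ⟨b', w, hbb, hw, rfl⟩ := List.forall₂_cons_left_iff.1 hb'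
    have hsign := mul_mul_mul_pos_of_mul_pos (haa ha) (hbb hb)
    rcases (mul_ne_zero ha hb).lt_or_gt with h | h
    · rw [signVar_cons_cons_of_mul_neg h, signVar_cons_cons_of_mul_neg
        ((neg_iff_neg_of_mul_pos hsign).1 h), ih (.cons hbb hw)]
    · rw [signVar_cons_cons_of_mul_pos h, signVar_cons_cons_of_mul_pos
        ((pos_iff_pos_of_mul_pos hsign).1 h), ih (.cons hbb hw)]
  | cons_zero hac _ ih =>
    obtain ⟨a', _, haa, hb', rfl⟩ := List.forall₂_cons_left_iff.1 huw
    obtain ⟨b', _, -, hc', rfl⟩ := List.forall₂_cons_left_iff.1 hb'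
    obtain ⟨c', w, hcc, hw, rfl⟩ := List.forall₂_cons_left_iff.1 hc'
    have hac' : a' * c' < 0 := (neg_iff_neg_of_mul_pos (mul_mul_mul_pos_of_mul_pos
      (haa (left_ne_zero_of_mul hac.ne)) (hcc (right_ne_zero_of_mul hac.ne)))).1 hac
    rw [signVar_cons_zero_cons, signVar_cons_cons_of_mul_neg hac, ← ih (.cons hcc hw)]
    rcases lt_trichotomy (a' * b') 0 with h | h | h
    · rw [signVar_cons_cons_of_mul_neg h, signVar_cons_cons_of_mul_pos
        (by nlinarith [mul_pos_of_neg_of_neg h hac', mul_self_nonneg a'])]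
    · obtain rfl : b' = 0 := (mul_eq_zero.1 h).resolve_left (left_ne_zero_of_mul hac'.ne)
      rw [signVar_cons_zero_cons, signVar_cons_cons_of_mul_neg hac']
    · rw [signVar_cons_cons_of_mul_pos h, signVar_cons_cons_of_mul_neg
        (by nlinarith [mul_neg_of_pos_of_neg h hac', mul_self_nonneg a'])]

lemma List.ofFn_succ_eq_cons {α : Type*} (u : ℕ → α) (n : ℕ) :
    (List.ofFn fun i : Fin (n + 1) => u i) = u 0 :: List.ofFn fun i : Fin n => u (i + 1) := by
  simp [List.ofFn_succ]

theorem signAdmissible_ofFn {n : ℕ} {u : ℕ → ℝ} (h0 : u 0 ≠ 0) (hn : u n ≠ 0)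
    (hmid : ∀ i, i + 2 ≤ n → u (i + 1) = 0 → u i * u (i + 2) < 0) :
    SignAdmissible (List.ofFn fun i : Fin (n + 1) => u i) := by
  induction n using Nat.strong_induction_on generalizing u with
  | _ n ih =>
  match n with
  | 0 => exact .singleton h0
  | m + 1 =>
    rw [List.ofFn_succ_eq_cons, List.ofFn_succ_eq_cons (fun i => u (i + 1))]
    by_cases h1 : u 1 = 0
    · obtain ⟨k, rfl⟩ : ∃ k, m = k + 1 := Nat.exists_eq_add_one.2 <| Nat.pos_of_ne_zero <| by
        rintro rfl; exact hn h1
      have h02 := hmid 0 (by omega) h1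
      have := ih k (by omega) (u := fun i => u (i + 2)) (right_ne_zero_of_mul h02.ne) hn
        fun i hi => hmid (i + 2) (by omega)
      rw [h1, List.ofFn_succ_eq_cons (fun i => u (i + 1 + 1))]
      exact .cons_zero h02 (by simpa [List.ofFn_succ_eq_cons] using this)
    · have := ih m (by omega) (u := fun i => u (i + 1)) h1 hn
        fun i hi => hmid (i + 1) (by omega)
      exact .cons h0 h1 (by simpa [List.ofFn_succ_eq_cons] using this)

theorem eventually_signVar_ofFn_eq {X : Type*} [TopologicalSpace X] {n : ℕ} {g : ℕ → X → ℝ}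
    {y : X} (hg : ∀ i ≤ n, ContinuousAt (g i) y)
    (hy : SignAdmissible (List.ofFn fun i : Fin (n + 1) => g i y)) :
    ∀ᶠ x in 𝓝 y, signVar (List.ofFn fun i : Fin (n + 1) => g i x) =
      signVar (List.ofFn fun i : Fin (n + 1) => g i y) := by
  have hsign : ∀ᶠ x in 𝓝 y, ∀ i : Fin (n + 1), g i y ≠ 0 → 0 < g i y * g i x := by
    refine eventually_all.2 fun i => ?_
    by_cases h : g i y = 0
    · exact .of_forall fun _ h' => absurd h h'
    · filter_upwards [(continuousAt_const.mul (hg i (Fin.is_le i))).eventually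
        (lt_mem_nhds (mul_self_pos.2 h))] with x hx _ using hx
  filter_upwards [hsign] with x hx
  refine hy.signVar_eq (List.forall₂_iff_get.2 ⟨by simp, fun i hi _ => ?_⟩)
  simpa only [List.get_eq_getElem, List.getElem_ofFn] using hx ⟨i, by simpa using hi⟩

namespace Set.Finite

variable {α : Type*} [LinearOrder α] {s : Set α}

theorem ncard_inter_Iic (hs : s.Finite) (y : α) [Decidable (y ∈ s)] :
    (s ∩ Iic y).ncard = (s ∩ Iio y).ncard + if y ∈ s then 1 else 0 := by
  rw [← Iio_insert]
  split_ifs with h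
  · rw [inter_insert_of_mem h, ncard_insert_of_notMem (by simp) (hs.inter_of_left _)]
  · rw [inter_insert_of_notMem h, add_zero]

variable [TopologicalSpace α] [OrderTopology α]

theorem eventually_nhdsLT_inter_Iic (hs : s.Finite) (y : α) :
    ∀ᶠ x in 𝓝[<] y, s ∩ Iic x = s ∩ Iio y := by
  have hlt : ∀ᶠ x in 𝓝[<] y, ∀ z ∈ s ∩ Iio y, z < x :=
    (eventually_all_finite (hs.inter_of_left _)).2 fun _ hz =>
      nhdsWithin_le_nhds (lt_mem_nhds hz.2)
  filter_upwards [hlt, self_mem_nhdsWithin] with x hx hxy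
  ext z
  exact ⟨fun hz => ⟨hz.1, lt_of_le_of_lt hz.2 hxy⟩, fun hz => ⟨hz.1, (hx z hz).le⟩⟩

theorem eventually_nhdsGT_inter_Iic (hs : s.Finite) (y : α) :
    ∀ᶠ x in 𝓝[>] y, s ∩ Iic x = s ∩ Iic y := by
  have hgt : ∀ᶠ x in 𝓝[>] y, ∀ z ∈ s ∩ Ioi y, x < z :=
    (eventually_all_finite (hs.inter_of_left _)).2 fun _ hz =>
      nhdsWithin_le_nhds (gt_mem_nhds hz.2)
  filter_upwards [hgt, self_mem_nhdsWithin] with x hx hxy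
  ext z
  exact ⟨fun hz => ⟨hz.1, not_lt.1 fun hzy => (hx z ⟨hz.1, hzy⟩).not_ge hz.2⟩,
    fun hz => ⟨hz.1, hz.2.trans (le_of_lt hxy)⟩⟩

end Set.Finite

namespace IsSturmSequence

variable {a b : ℝ} {N : ℕ} {f : ℕ → ℝ → ℝ} {y : ℝ}

theorem continuousAt (hS : IsSturmSequence a b N f) {i : ℕ} (hi : i ≤ N) (hy : y ∈ Ioo a b) :
    ContinuousAt (f i) y :=
  (hS.1 i hi).continuousAt (Ioo_mem_nhds hy.1 hy.2)

theorem eventually_signVar_eq_of_ne_zero (hS : IsSturmSequence a b N f) (hy : y ∈ Ioo a b)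
    (h0 : f 0 y ≠ 0) :
    ∀ᶠ x in 𝓝 y, signVar (List.ofFn fun i : Fin (N + 1) => f i x) =
      signVar (List.ofFn fun i : Fin (N + 1) => f i y) :=
  eventually_signVar_ofFn_eq (fun _ hi => hS.continuousAt hi hy) <|
    signAdmissible_ofFn h0 (hS.2.2.2 y hy) fun i hi h =>
      hS.2.2.1 (i + 1) (by omega) (by omega) y hy h

theorem exists_eq_succ_of_eq_zero (hS : IsSturmSequence a b N f) (hy : y ∈ Ioo a b)
    (h0 : f 0 y = 0) : ∃ M, N = M + 1 :=
  Nat.exists_eq_add_one.2 <| Nat.pos_of_ne_zero <| by rintro rfl; exact hS.2.2.2 y hy h0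

theorem eventually_signVar_tail_eq {M : ℕ} (hS : IsSturmSequence a b (M + 1) f)
    (hy : y ∈ Ioo a b) (h0 : f 0 y = 0) :
    ∀ᶠ x in 𝓝 y, signVar (List.ofFn fun i : Fin (M + 1) => f (i + 1) x) =
      signVar (List.ofFn fun i : Fin (M + 2) => f i y) := by
  have h1 : f 1 y ≠ 0 := by
    intro h1
    rcases M with _ | M
    · exact hS.2.2.2 y hy h1
    · simpa [h0] using hS.2.2.1 1 le_rfl (by omega) y hy h1
  rw [List.ofFn_succ_eq_cons (fun i => f i y), h0, signVar_zero_cons]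
  exact eventually_signVar_ofFn_eq (fun _ hi => hS.continuousAt (by omega) hy) <|
    signAdmissible_ofFn h1 (hS.2.2.2 y hy) fun i hi h =>
      hS.2.2.1 (i + 2) (by omega) (by omega) y hy h

theorem eventually_nhdsLT_signVar_eq (hS : IsSturmSequence a b N f) (hy : y ∈ Ioo a b) :
    ∀ᶠ x in 𝓝[<] y, signVar (List.ofFn fun i : Fin (N + 1) => f i x) =
      signVar (List.ofFn fun i : Fin (N + 1) => f i y) + if f 0 y = 0 then 1 else 0 := by
  split_ifs with h0
  · obtain ⟨M, rfl⟩ := hS.exists_eq_succ_of_eq_zero hy h0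
    obtain ⟨ε, hε, -, -, hleft, -⟩ := hS.2.1 y hy h0
    filter_upwards [nhdsWithin_le_nhds (hS.eventually_signVar_tail_eq hy h0),
      Ioo_mem_nhdsLT (sub_lt_self y hε)] with x hx hxy
    rw [List.ofFn_succ_eq_cons (fun i => f i x), List.ofFn_succ_eq_cons (fun i => f (i + 1) x),
      signVar_cons_cons_of_mul_neg (hleft x hxy.1 hxy.2),
      ← List.ofFn_succ_eq_cons (fun i => f (i + 1) x), hx]
  · exact nhdsWithin_le_nhds (hS.eventually_signVar_eq_of_ne_zero hy h0)

theorem eventually_nhdsGT_signVar_eq (hS : IsSturmSequence a b N f) (hy : y ∈ Ioo a b) :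
    ∀ᶠ x in 𝓝[>] y, signVar (List.ofFn fun i : Fin (N + 1) => f i x) =
      signVar (List.ofFn fun i : Fin (N + 1) => f i y) := by
  by_cases h0 : f 0 y = 0
  · obtain ⟨M, rfl⟩ := hS.exists_eq_succ_of_eq_zero hy h0
    obtain ⟨ε, hε, -, -, -, hright⟩ := hS.2.1 y hy h0
    filter_upwards [nhdsWithin_le_nhds (hS.eventually_signVar_tail_eq hy h0),
      Ioo_mem_nhdsGT (lt_add_of_pos_right y hε)] with x hx hxy
    rw [List.ofFn_succ_eq_cons (fun i => f i x), List.ofFn_succ_eq_cons (fun i => f (i + 1) x),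
      signVar_cons_cons_of_mul_pos (hright x hxy.1 hxy.2),
      ← List.ofFn_succ_eq_cons (fun i => f (i + 1) x), hx]
  · exact nhdsWithin_le_nhds (hS.eventually_signVar_eq_of_ne_zero hy h0)

theorem eventually_nhdsNE_ne_zero (hS : IsSturmSequence a b N f) (hy : y ∈ Ioo a b) :
    ∀ᶠ x in 𝓝[≠] y, f 0 x ≠ 0 := by
  by_cases h0 : f 0 y = 0
  · obtain ⟨ε, hε, -, -, hleft, hright⟩ := hS.2.1 y hy h0
    rw [← nhdsLT_sup_nhdsGT, eventually_sup]
    exact ⟨mem_of_superset (Ioo_mem_nhdsLT (sub_lt_self y hε)) fun x hx =>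
        left_ne_zero_of_mul (hleft x hx.1 hx.2).ne,
      mem_of_superset (Ioo_mem_nhdsGT (lt_add_of_pos_right y hε)) fun x hx =>
        left_ne_zero_of_mul (hright x hx.1 hx.2).ne'⟩
  · exact nhdsWithin_le_nhds ((hS.continuousAt (Nat.zero_le N) hy).eventually_ne h0)

theorem finite_zeros {c d : ℝ} (hS : IsSturmSequence a b N f) (hcd : Icc c d ⊆ Ioo a b) :
    {x ∈ Icc c d | f 0 x = 0}.Finite := by
  have hclosed : IsClosed {x ∈ Icc c d | f 0 x = 0} :=
    ((hS.1 0 (Nat.zero_le N)).mono hcd).preimage_isClosed_of_isClosed isClosed_Icc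
      isClosed_singleton
  refine (isCompact_Icc.of_isClosed_subset hclosed fun _ hx => hx.1).finite <|
    isDiscrete_iff_nhdsNE.2 fun y hy => inf_principal_eq_bot.2 ?_
  filter_upwards [hS.eventually_nhdsNE_ne_zero (hcd hy.1)] with x hx hxZ using hx hxZ.2

theorem continuousOn_signVar_add_ncard {c d : ℝ} (hS : IsSturmSequence a b N f)
    (hcd : Icc c d ⊆ Ioo a b) :
    ContinuousOn (fun x => signVar (List.ofFn fun i : Fin (N + 1) => f i x) +
      ({z ∈ Ioc c d | f 0 z = 0} ∩ Iic x).ncard) (Icc c d) := by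
  set Z := {z ∈ Ioc c d | f 0 z = 0}
  have hZ : Z.Finite := (hS.finite_zeros hcd).subset fun z hz => ⟨Ioc_subset_Icc_self hz.1, hz.2⟩
  intro y hy
  rw [ContinuousWithinAt, nhds_discrete, tendsto_pure, eventually_nhdsWithin_iff,
    ← nhdsNE_sup_pure, ← nhdsLT_sup_nhdsGT, eventually_sup, eventually_sup]
  refine ⟨⟨?_, ?_⟩, fun _ => rfl⟩
  · filter_upwards [hS.eventually_nhdsLT_signVar_eq (hcd hy), hZ.eventually_nhdsLT_inter_Iic y,
      self_mem_nhdsWithin] with x hV hZx hxy hx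
    have hmem : y ∈ Z ↔ f 0 y = 0 := ⟨And.right, fun h => ⟨⟨hx.1.trans_lt hxy, hy.2⟩, h⟩⟩
    rw [hV, hZx, hZ.ncard_inter_Iic y]
    simp only [hmem]
    split_ifs <;> omega
  · filter_upwards [hS.eventually_nhdsGT_signVar_eq (hcd hy), hZ.eventually_nhdsGT_inter_Iic y]
      with x hV hZx _
    rw [hV, hZx]

end IsSturmSequence

theorem stmt_4 (a b : ℝ) (N : ℕ) (f : ℕ → ℝ → ℝ)
    (hS : IsSturmSequence a b N f)
    (c d : ℝ) (hac : a < c) (hcd : c < d) (hdb : d < b) :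
    {x ∈ Set.Ioc c d | f 0 x = 0}.ncard =
      signVar (List.ofFn fun i : Fin (N + 1) => f i c) -
        signVar (List.ofFn fun i : Fin (N + 1) => f i d) := by
  have key := isPreconnected_Icc.constant
    (hS.continuousOn_signVar_add_ncard (Icc_subset_Ioo hac hdb))
    (left_mem_Icc.2 hcd.le) (right_mem_Icc.2 hcd.le)
  have hc : {x ∈ Ioc c d | f 0 x = 0} ∩ Iic c = ∅ :=
    eq_empty_iff_forall_notMem.2 fun x hx => not_le.2 hx.1.1.1 hx.2
  have hd : {x ∈ Ioc c d | f 0 x = 0} ∩ Iic d = {x ∈ Ioc c d | f 0 x = 0} :=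
    inter_eq_left.2 fun x hx => hx.1.2
  simp only [hc, hd, ncard_empty, add_zero] at key
  omega
end

section
/- Let φ satisfy φ'(x) = Φ(x, φ(x)) with Φ ∈ ℤ[X,Y], and let G ∈ ℤ[X,Y] be irreducible with G̃ = ∂G/∂X + (∂G/∂Y)Φ not divisible by G, so that R := Res_Y(G, G̃) ∈ ℤ[X] is nonzero. If g(x) = G(x, φ(x)) is not identically zero and α is a zero of g of multiplicity ≥ 2, then mult(α, g) ≤ mult(α, R) + 1. -/
/-!
Along the graph of `φ` the polynomial `G̃ = ∂G/∂X + (∂G/∂Y) Φ` evaluates to `g'`, so the Bézout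
identity for the resultant becomes `R(x) = s(x) g(x) + t(x) g'(x)` with `s`, `t` analytic. If `g`
vanishes to order `m ≥ 1` at `α`, then `g'` vanishes to order `m - 1`, hence so does `R`; and the
order of vanishing of a nonzero polynomial is its root multiplicity.
-/

/-- Multiplicity of `α` as a zero of an analytic function `g`:
the least `r` with `g^{(r)}(α) ≠ 0`. -/
noncomputable def amult (g : ℝ → ℝ) (α : ℝ) : ℕ :=
  sInf {r | iteratedDeriv r g α ≠ 0}

open Polynomial Filter Topology

theorem natCast_amult_le_analyticOrderAt {f : ℝ → ℝ} {a : ℝ} (hf : AnalyticAt ℝ f a) :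
    (amult f a : ℕ∞) ≤ analyticOrderAt f a :=
  (natCast_le_analyticOrderAt_iff_iteratedDeriv_eq_zero hf).2 fun _ hi => by
    simpa using Nat.notMem_of_lt_sInf hi

section

variable {𝕜 : Type*} [NontriviallyNormedField 𝕜]

theorem Polynomial.analyticOrderAt_eval_eq_rootMultiplicity {P : 𝕜[X]} (hP : P ≠ 0) (a : 𝕜) :
    analyticOrderAt (fun x => P.eval x) a = P.rootMultiplicity a := by
  obtain ⟨q, hPq, hq⟩ := P.exists_eq_pow_rootMultiplicity_mul_and_not_dvd hP a
  refine ((AnalyticOnNhd.eval_polynomial P) a trivial).analyticOrderAt_eq_natCast.2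
    ⟨fun x => q.eval x, AnalyticOnNhd.eval_polynomial q a trivial, ?_, .of_forall fun x => ?_⟩
  · rwa [dvd_iff_isRoot] at hq
  · conv_lhs => rw [hPq]
    simp

theorem MvPolynomial.hasDerivAt_aeval {R σ : Type*} [CommSemiring R] [Algebra R 𝕜] [Fintype σ]
    {c : 𝕜 → σ → 𝕜} {c' : σ → 𝕜} {x : 𝕜} (hc : ∀ i, HasDerivAt (c · i) (c' i) x)
    (P : MvPolynomial σ R) :
    HasDerivAt (fun y => aeval (c y) P) (∑ i, aeval (c x) (pderiv i P) * c' i) x := by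
  classical
  induction P using MvPolynomial.induction_on with
  | C a => simpa using hasDerivAt_const x (algebraMap R 𝕜 a)
  | add p q hp hq =>
    simpa only [map_add, add_mul, Finset.sum_add_distrib] using hp.fun_add hq
  | mul_X p j hp =>
    simp only [map_mul, aeval_X]
    refine (hp.mul (hc j)).congr_deriv ?_
    simp only [Derivation.leibniz, pderiv_X, smul_eq_mul, map_add, map_mul, aeval_X,
      Pi.single_apply, mul_ite, mul_one, mul_zero, apply_ite (aeval (c x)), map_zero, ite_mul,
      zero_mul, Finset.sum_ite_eq, Finset.mem_univ, if_true, add_mul, Finset.sum_add_distrib]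
    rw [add_comm, Finset.sum_mul]
    exact congrArg _ (Finset.sum_congr rfl fun _ _ => by ring)

theorem MvPolynomial.hasDerivAt_aeval_graph {R : Type*} [CommSemiring R] [Algebra R 𝕜]
    {Φ : MvPolynomial (Fin 2) R} {φ : 𝕜 → 𝕜} {x : 𝕜}
    (hφ : HasDerivAt φ (aeval ![x, φ x] Φ) x) (P : MvPolynomial (Fin 2) R) :
    HasDerivAt (fun y => aeval ![y, φ y] P) (aeval ![x, φ x] (pderiv 0 P + pderiv 1 P * Φ)) x := by
  convert hasDerivAt_aeval (c := fun y => ![y, φ y]) (c' := ![1, aeval ![x, φ x] Φ])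
    (Fin.forall_fin_two.2 ⟨hasDerivAt_id x, hφ⟩) P using 1
  simp [Fin.sum_univ_two]

theorem analyticOrderAt_le_add_one_of_eventuallyEq_mul_add_mul_deriv {f s t r : 𝕜 → 𝕜} {a : 𝕜}
    [CharZero 𝕜] [CompleteSpace 𝕜]
    (hf : AnalyticAt 𝕜 f a) (hs : AnalyticAt 𝕜 s a) (ht : AnalyticAt 𝕜 t a)
    (hr : r =ᶠ[𝓝 a] s * f + t * deriv f) :
    analyticOrderAt f a ≤ analyticOrderAt r a + 1 := by
  rcases ne_or_eq (f a) 0 with hfa | hfa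
  · simp [analyticOrderAt_eq_zero.2 (.inr hfa)]
  have hderiv : analyticOrderAt (deriv f) a + 1 = analyticOrderAt f a := by
    simpa [hfa] using hf.analyticOrderAt_deriv_add_one
  rw [← hderiv, analyticOrderAt_congr hr]
  gcongr
  refine le_trans (le_min ?_ ?_) le_analyticOrderAt_add
  · rw [analyticOrderAt_mul hs hf, ← hderiv]
    exact le_add_left le_self_add
  · rw [analyticOrderAt_mul ht hf.deriv]
    exact le_add_self

end

theorem stmt_6_general (Φ G : MvPolynomial (Fin 2) ℤ)
    (R : Polynomial ℤ) (hR : R ≠ 0) (S T : MvPolynomial (Fin 2) ℤ)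
    (hres : Polynomial.aeval (MvPolynomial.X 0) R
      = S * G + T * (MvPolynomial.pderiv 0 G + MvPolynomial.pderiv 1 G * Φ))
    (U : Set ℝ) (hU : IsOpen U) (φ : ℝ → ℝ) (hφan : AnalyticOnNhd ℝ φ U)
    (hφ : ∀ x ∈ U, HasDerivAt φ (MvPolynomial.aeval ![x, φ x] Φ) x)
    (g : ℝ → ℝ) (hg : g = fun x => MvPolynomial.aeval ![x, φ x] G)
    (α : ℝ) (hα : α ∈ U) :
    amult g α ≤ (R.map (Int.castRingHom ℝ)).rootMultiplicity α + 1 := by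
  set ev : MvPolynomial (Fin 2) ℤ → ℝ → ℝ := fun P x => MvPolynomial.aeval ![x, φ x] P
  have hev : ∀ P, AnalyticAt ℝ (ev P) α := fun P =>
    .aeval_mvPolynomial (Fin.forall_fin_two.2 ⟨analyticAt_id, hφan α hα⟩) P
  have hderiv : deriv g =ᶠ[𝓝 α] ev (MvPolynomial.pderiv 0 G + MvPolynomial.pderiv 1 G * Φ) := by
    filter_upwards [hU.mem_nhds hα] with x hx
    rw [hg]
    exact (MvPolynomial.hasDerivAt_aeval_graph (hφ x hx) G).deriv
  have hg_an : AnalyticAt ℝ g α := by rw [hg]; exact hev G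
  have hresultant :
      (fun x => (R.map (Int.castRingHom ℝ)).eval x) =ᶠ[𝓝 α] ev S * g + ev T * deriv g := by
    filter_upwards [hderiv] with x hx
    have := congrArg (MvPolynomial.aeval ![x, φ x]) hres
    rw [← Polynomial.aeval_algHom_apply] at this
    rw [Pi.add_apply, Pi.mul_apply, Pi.mul_apply, hx, hg, ← algebraMap_int_eq,
      Polynomial.eval_map_algebraMap]
    simpa [ev] using this
  have horder := analyticOrderAt_le_add_one_of_eventuallyEq_mul_add_mul_deriv hg_an (hev S)
    (hev T) hresultant
  rw [Polynomial.analyticOrderAt_eval_eq_rootMultiplicity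
    ((Polynomial.map_ne_zero_iff Int.cast_injective).2 hR)] at horder
  exact_mod_cast (natCast_amult_le_analyticOrderAt hg_an).trans horder

theorem stmt_6 (Φ G : MvPolynomial (Fin 2) ℤ) (hGirr : Irreducible G)
    (hdiv : ¬ G ∣ (MvPolynomial.pderiv 0 G + MvPolynomial.pderiv 1 G * Φ))
    (R : Polynomial ℤ) (hR : R ≠ 0) (S T : MvPolynomial (Fin 2) ℤ)
    (hres : Polynomial.aeval (MvPolynomial.X 0) R
      = S * G + T * (MvPolynomial.pderiv 0 G + MvPolynomial.pderiv 1 G * Φ))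
    (U : Set ℝ) (hU : IsOpen U) (φ : ℝ → ℝ) (hφan : AnalyticOnNhd ℝ φ U)
    (hφ : ∀ x ∈ U, HasDerivAt φ (MvPolynomial.aeval ![x, φ x] Φ) x)
    (g : ℝ → ℝ) (hg : g = fun x => MvPolynomial.aeval ![x, φ x] G)
    (hgne : ∃ x ∈ U, g x ≠ 0)
    (α : ℝ) (hα : α ∈ U) (h0 : g α = 0) (hmult : 2 ≤ amult g α) :
    amult g α ≤ (R.map (Int.castRingHom ℝ)).rootMultiplicity α + 1 :=
  stmt_6_general Φ G R hR S T hres U hU φ hφan hφ g hg α hα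
end

section
/- Let F ∈ ℤ[X,Y] with deg_Y F > 0 and let F̃ = ∂F/∂X + (∂F/∂Y)·Φ for a polynomial Φ ∈ ℤ[X,Y]. If F is square-free, F₀ = F / cont(F), S = gcd(F₀, F̃₀) has positive degree in Y, and F₀ = S·U, then U and Ũ = ∂U/∂X + (∂U/∂Y)·Φ have no common factor of positive degree in Y. -/
/-- Partial derivative with respect to `X` of a polynomial in `ℤ[X][Y]`
(derivative applied coefficientwise). -/
noncomputable def dX (G : Polynomial (Polynomial ℤ)) : Polynomial (Polynomial ℤ) :=
  G.sum fun n c => Polynomial.C (Polynomial.derivative c) * Polynomial.X ^ n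

/-- The operation `G ↦ G̃ = ∂G/∂X + (∂G/∂Y)·Φ` on `ℤ[X][Y]` (`Y` is the outer variable). -/
noncomputable def tld (Φ G : Polynomial (Polynomial ℤ)) : Polynomial (Polynomial ℤ) :=
  dX G + Polynomial.derivative G * Φ

lemma dX_coeff (G : Polynomial (Polynomial ℤ)) (n : ℕ) :
    (dX G).coeff n = Polynomial.derivative (G.coeff n) := by
  rw [dX, Polynomial.sum, Polynomial.finset_sum_coeff]
  simp only [Polynomial.coeff_C_mul, Polynomial.coeff_X_pow, mul_ite, mul_one, mul_zero]
  rw [Finset.sum_ite_eq G.support n (fun k => Polynomial.derivative (G.coeff k))]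
  by_cases h : n ∈ G.support
  · simp [h]
  · simp only [h, if_false]
    rw [Polynomial.notMem_support_iff.mp h]
    simp

lemma dX_mul (p q : Polynomial (Polynomial ℤ)) :
    dX (p * q) = dX p * q + p * dX q := by
  ext n
  simp only [dX_coeff, Polynomial.coeff_add, Polynomial.coeff_mul, map_sum,
    Polynomial.derivative_mul, ← Finset.sum_add_distrib]

lemma tld_mul (Φ p q : Polynomial (Polynomial ℤ)) :
    tld Φ (p * q) = tld Φ p * q + p * tld Φ q := by
  simp only [tld, dX_mul, Polynomial.derivative_mul]
  ring

theorem stmt_8 (Φ F F₀ S U : Polynomial (Polynomial ℤ)) (c : Polynomial ℤ)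
    (hFY : 0 < F.natDegree) (hsf : Squarefree F)
    (hcont : F = Polynomial.C c * F₀) (hprim : F₀.IsPrimitive)
    (hSdvd₀ : S ∣ F₀) (hSdvd₁ : S ∣ tld Φ F₀)
    (hSgcd : ∀ T : Polynomial (Polynomial ℤ), T ∣ F₀ → T ∣ tld Φ F₀ → T ∣ S)
    (hSdeg : 0 < S.natDegree) (hU : F₀ = S * U) :
    ∀ T : Polynomial (Polynomial ℤ), 0 < T.natDegree → T ∣ U → T ∣ tld Φ U → False := by
  intro T hT hTU hTtU
  have h1 : T ∣ tld Φ F₀ := by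
    rw [hU, tld_mul]
    exact dvd_add (hTU.mul_left _) (hTtU.mul_left _)
  have h2 : T ∣ F₀ := hTU.trans ⟨S, by rw [hU, mul_comm]⟩
  have hTS : T ∣ S := hSgcd T h2 h1
  have hTT : T * T ∣ F := by
    rw [hcont, hU]
    exact (mul_dvd_mul hTS hTU).mul_left _
  have := hsf T hTT
  exact absurd (Polynomial.natDegree_eq_zero_of_isUnit this) (by omega)
end

section
/- Let g(x) = G(x, e^{h(x)}) with G ∈ ℤ[X,Y], h ∈ ℤ[X]. Then g'(x) = G̃(x, e^{h(x)}), where G̃ = ∂G/∂X + h'(X)·Y·∂G/∂Y, and deg_X(G̃) ≤ deg(h) − 1 + deg_X(G), deg_Y(G̃) ≤ deg_Y(G), and H(G̃) ≤ H(G)·(deg_X(G) + deg_Y(G)·deg(h)²·H(h)). -/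
/-- Height of an integer polynomial: max absolute value of its coefficients. -/
def heightP (h : Polynomial ℤ) : ℕ := h.support.sup fun i => (h.coeff i).natAbs

/-- Height of an integer bivariate polynomial. -/
def heightM (G : MvPolynomial (Fin 2) ℤ) : ℕ :=
  G.support.sup fun m => (MvPolynomial.coeff m G).natAbs

/-- The operation `G ↦ G̃ = ∂G/∂X + h'(X)·Y·∂G/∂Y`. -/
noncomputable def etld (h : Polynomial ℤ) (G : MvPolynomial (Fin 2) ℤ) :
    MvPolynomial (Fin 2) ℤ :=
  MvPolynomial.pderiv 0 G +
    Polynomial.aeval (MvPolynomial.X 0) (Polynomial.derivative h) *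
      MvPolynomial.X 1 * MvPolynomial.pderiv 1 G

/-!
`etld h` is the derivation `∂/∂X + h'(X) Y ∂/∂Y` of `ℤ[X, Y]`, so both sides of the derivative
formula are additive and satisfy the Leibniz rule, and it suffices to check it on `X` and `Y`,
where it is the chain rule for `x` and `e^{h(x)}`.

For the bounds write `G̃ = ∂G/∂X + h'(X) · (Y ∂G/∂Y)`. The coefficient of `∂G/∂X` at `m` is
`(m₀ + 1)` times a coefficient of `G`, and the Euler operator `Y ∂/∂Y` multiplies the coefficient
at `m` by `m₁`; both factors are at most the corresponding partial degree of `G`, and neither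
operator enlarges the support beyond shifts of that of `G`. Finally `h'` has at most `deg h`
nonzero coefficients, each of size at most `deg h · H(h)`.
-/

open MvPolynomial

namespace MvPolynomial

section CommSemiring

variable {σ R : Type*} [CommSemiring R]

theorem coeff_X_mul_pderiv (i : σ) (f : MvPolynomial σ R) (m : σ →₀ ℕ) :
    coeff m (X i * pderiv i f) = m i • coeff m f := by
  classical
  induction f using MvPolynomial.induction_on' with
  | monomial s a =>
    rw [X_mul_pderiv_monomial, coeff_smul, coeff_monomial]
    split_ifs with hs
    · rw [hs]
    · rw [smul_zero, smul_zero]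
  | add p q hp hq => rw [map_add, mul_add, coeff_add, hp, hq, coeff_add, smul_add]

theorem degreeOf_pderiv_le (i j : σ) (f : MvPolynomial σ R) :
    degreeOf j (pderiv i f) ≤ degreeOf j f := by
  refine degreeOf_le_iff.2 fun m hm =>
    le_trans ?_ (monomial_le_degreeOf j (m := m + Finsupp.single i 1) ?_)
  · simp
  · rw [mem_support_iff] at hm ⊢
    intro h0
    rw [coeff_pderiv, h0, zero_mul] at hm
    exact hm rfl

theorem degreeOf_X_mul_pderiv_le (i j : σ) (f : MvPolynomial σ R) :
    degreeOf j (X i * pderiv i f) ≤ degreeOf j f := by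
  refine degreeOf_le_iff.2 fun m hm => monomial_le_degreeOf j ?_
  rw [mem_support_iff] at hm ⊢
  intro h0
  rw [coeff_X_mul_pderiv, h0, smul_zero] at hm
  exact hm rfl

theorem degreeOf_aeval_le (i : σ) (q : MvPolynomial σ R) (p : Polynomial R) :
    degreeOf i (Polynomial.aeval q p) ≤ p.natDegree * degreeOf i q := by
  rw [Polynomial.aeval_eq_sum_range]
  refine (degreeOf_sum_le _ _ _).trans (Finset.sup_le fun k hk => ?_)
  rw [smul_eq_C_mul]
  refine (degreeOf_C_mul_le _ _ _).trans ((degreeOf_pow_le _ _ _).trans ?_)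
  exact Nat.mul_le_mul_right _ (Finset.mem_range_succ_iff.1 hk)

end CommSemiring

theorem natAbs_coeff_X_mul_pderiv_le {σ : Type*} (i : σ) (f : MvPolynomial σ ℤ) (m : σ →₀ ℕ) :
    (coeff m (X i * pderiv i f)).natAbs ≤ degreeOf i f * (coeff m f).natAbs := by
  rw [coeff_X_mul_pderiv, nsmul_eq_mul, Int.natAbs_mul, Int.natAbs_natCast]
  rcases eq_or_ne (coeff m f) 0 with h0 | h0
  · simp [h0]
  · exact Nat.mul_le_mul_right _ (monomial_le_degreeOf i (mem_support_iff.2 h0))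

end MvPolynomial

theorem natAbs_coeff_le_heightM (G : MvPolynomial (Fin 2) ℤ) (m : Fin 2 →₀ ℕ) :
    (coeff m G).natAbs ≤ heightM G := by
  rcases eq_or_ne (coeff m G) 0 with h0 | h0
  · simp [h0]
  · exact Finset.le_sup (f := fun m => (coeff m G).natAbs) (mem_support_iff.2 h0)

theorem heightM_le {G : MvPolynomial (Fin 2) ℤ} {N : ℕ} (hN : ∀ m, (coeff m G).natAbs ≤ N) :
    heightM G ≤ N :=
  Finset.sup_le fun m _ => hN m

theorem heightM_add_le (p q : MvPolynomial (Fin 2) ℤ) :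
    heightM (p + q) ≤ heightM p + heightM q :=
  heightM_le fun m => (coeff_add m p q ▸ Int.natAbs_add_le _ _).trans
    (add_le_add (natAbs_coeff_le_heightM p m) (natAbs_coeff_le_heightM q m))

theorem heightM_sum_le {ι : Type*} (s : Finset ι) (f : ι → MvPolynomial (Fin 2) ℤ) :
    heightM (∑ i ∈ s, f i) ≤ ∑ i ∈ s, heightM (f i) :=
  Finset.le_sum_of_subadditive heightM (by simp [heightM]) heightM_add_le s f

theorem heightM_monomial_mul_le (s : Fin 2 →₀ ℕ) (a : ℤ) (q : MvPolynomial (Fin 2) ℤ) :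
    heightM (monomial s a * q) ≤ a.natAbs * heightM q :=
  heightM_le fun m => by
    rw [coeff_monomial_mul']
    split_ifs
    · rw [Int.natAbs_mul]
      exact Nat.mul_le_mul_left _ (natAbs_coeff_le_heightM q _)
    · simp

theorem heightM_aeval_X_mul_le (i : Fin 2) (p : Polynomial ℤ) (q : MvPolynomial (Fin 2) ℤ) :
    heightM (Polynomial.aeval (X i) p * q) ≤
      (∑ k ∈ p.support, (p.coeff k).natAbs) * heightM q := by
  have hp : Polynomial.aeval (X i : MvPolynomial (Fin 2) ℤ) p =
      ∑ k ∈ p.support, monomial (Finsupp.single i k) (p.coeff k) := by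
    conv_lhs => rw [p.as_sum_support]
    simp only [map_sum, Polynomial.aeval_monomial, algebraMap_eq, X_pow_eq_monomial,
      C_mul_monomial, mul_one]
  rw [hp, Finset.sum_mul, Finset.sum_mul]
  exact (heightM_sum_le _ _).trans (Finset.sum_le_sum fun k _ => heightM_monomial_mul_le _ _ _)

theorem heightM_X_mul_pderiv_le (i : Fin 2) (f : MvPolynomial (Fin 2) ℤ) :
    heightM (X i * pderiv i f) ≤ degreeOf i f * heightM f :=
  heightM_le fun m => (natAbs_coeff_X_mul_pderiv_le i f m).trans
    (Nat.mul_le_mul_left _ (natAbs_coeff_le_heightM f m))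

theorem heightM_pderiv_le (i : Fin 2) (f : MvPolynomial (Fin 2) ℤ) :
    heightM (pderiv i f) ≤ degreeOf i f * heightM f :=
  heightM_le fun m => by
    rw [← coeff_X_mul m i]
    exact (natAbs_coeff_le_heightM _ _).trans (heightM_X_mul_pderiv_le i f)

theorem natAbs_coeff_le_heightP (p : Polynomial ℤ) (k : ℕ) : (p.coeff k).natAbs ≤ heightP p := by
  rcases eq_or_ne (p.coeff k) 0 with h0 | h0
  · simp [h0]
  · exact Finset.le_sup (f := fun k => (p.coeff k).natAbs) (Polynomial.mem_support_iff.2 h0)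

theorem natAbs_coeff_derivative_le (p : Polynomial ℤ) (k : ℕ) :
    (p.derivative.coeff k).natAbs ≤ p.natDegree * heightP p := by
  rw [Polynomial.coeff_derivative, Int.natAbs_mul, mul_comm]
  rcases eq_or_ne (p.coeff (k + 1)) 0 with h0 | h0
  · simp [h0]
  · have hk := Polynomial.le_natDegree_of_ne_zero h0
    exact Nat.mul_le_mul (by omega) (natAbs_coeff_le_heightP p _)

theorem sum_natAbs_coeff_derivative_le (p : Polynomial ℤ) :
    ∑ k ∈ p.derivative.support, (p.derivative.coeff k).natAbs ≤ p.natDegree ^ 2 * heightP p := by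
  have hsupp : p.derivative.support ⊆ Finset.range p.natDegree := fun k hk => by
    rw [Polynomial.mem_support_iff, Polynomial.coeff_derivative] at hk
    have := Polynomial.le_natDegree_of_ne_zero (left_ne_zero_of_mul hk)
    rw [Finset.mem_range]
    omega
  calc ∑ k ∈ p.derivative.support, (p.derivative.coeff k).natAbs
      ≤ ∑ k ∈ Finset.range p.natDegree, (p.derivative.coeff k).natAbs :=
        Finset.sum_le_sum_of_subset hsupp
    _ ≤ p.natDegree * (p.natDegree * heightP p) := by
        simpa using Finset.sum_le_card_nsmul (Finset.range p.natDegree) _ _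
          fun k _ => natAbs_coeff_derivative_le p k
    _ = p.natDegree ^ 2 * heightP p := by ring

theorem etld_eq (h : Polynomial ℤ) (G : MvPolynomial (Fin 2) ℤ) :
    etld h G = pderiv 0 G + Polynomial.aeval (X 0) (Polynomial.derivative h) * (X 1 * pderiv 1 G) := by
  rw [etld, mul_assoc]

noncomputable def etldDerivation (h : Polynomial ℤ) :
    Derivation ℤ (MvPolynomial (Fin 2) ℤ) (MvPolynomial (Fin 2) ℤ) :=
  pderiv 0 + (Polynomial.aeval (X 0 : MvPolynomial (Fin 2) ℤ) h.derivative * X 1) • pderiv 1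

theorem etldDerivation_apply (h : Polynomial ℤ) (G : MvPolynomial (Fin 2) ℤ) :
    etldDerivation h G = etld h G :=
  rfl

theorem hasDerivAt_aeval_etld (h : Polynomial ℤ) (G : MvPolynomial (Fin 2) ℤ) (x : ℝ) :
    HasDerivAt (fun t => aeval ![t, Real.exp (Polynomial.aeval t h)] G)
      (aeval ![x, Real.exp (Polynomial.aeval x h)] (etld h G)) x := by
  rw [← etldDerivation_apply]
  induction G using MvPolynomial.induction_on with
  | C a => simpa using hasDerivAt_const x (algebraMap ℤ ℝ a)
  | add p q hp hq => simpa only [map_add] using hp.fun_add hq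
  | mul_X p i hp =>
    have hX : HasDerivAt
        (fun t => aeval ![t, Real.exp (Polynomial.aeval t h)] (X i : MvPolynomial (Fin 2) ℤ))
        (aeval ![x, Real.exp (Polynomial.aeval x h)] (etldDerivation h (X i))) x := by
      fin_cases i
      · simpa [etldDerivation] using hasDerivAt_id' x
      · simpa [etldDerivation, ← Polynomial.aeval_algHom_apply, mul_comm]
          using (h.hasDerivAt_aeval x).exp
    simpa [Derivation.leibniz, add_comm, mul_comm] using hp.fun_mul hX

theorem degreeOf_zero_etld_le (h : Polynomial ℤ) (G : MvPolynomial (Fin 2) ℤ) :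
    degreeOf 0 (etld h G) ≤ h.natDegree - 1 + degreeOf 0 G := by
  have hh' : degreeOf 0 (Polynomial.aeval (X 0 : MvPolynomial (Fin 2) ℤ) h.derivative) ≤
      h.natDegree - 1 :=
    (degreeOf_aeval_le _ _ _).trans (by simp)
  rw [etld_eq]
  refine (degreeOf_add_le _ _ _).trans (max_le ?_ ((degreeOf_mul_le _ _ _).trans ?_))
  · exact (degreeOf_pderiv_le _ _ _).trans (Nat.le_add_left _ _)
  · exact add_le_add hh' (degreeOf_X_mul_pderiv_le _ _ _)

theorem degreeOf_one_etld_le (h : Polynomial ℤ) (G : MvPolynomial (Fin 2) ℤ) :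
    degreeOf 1 (etld h G) ≤ degreeOf 1 G := by
  have hh' : degreeOf 1 (Polynomial.aeval (X 0 : MvPolynomial (Fin 2) ℤ) h.derivative) = 0 := by
    simpa [degreeOf_X_of_ne] using degreeOf_aeval_le 1 (X 0 : MvPolynomial (Fin 2) ℤ) h.derivative
  rw [etld_eq]
  refine (degreeOf_add_le _ _ _).trans (max_le ?_ ((degreeOf_mul_le _ _ _).trans ?_))
  · exact degreeOf_pderiv_le _ _ _
  · rw [hh', zero_add]
    exact degreeOf_X_mul_pderiv_le _ _ _

theorem heightM_etld_le (h : Polynomial ℤ) (G : MvPolynomial (Fin 2) ℤ) :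
    heightM (etld h G) ≤
      heightM G * (degreeOf 0 G + degreeOf 1 G * h.natDegree ^ 2 * heightP h) :=
  calc heightM (etld h G)
      ≤ heightM (pderiv 0 G) + (∑ k ∈ h.derivative.support, (h.derivative.coeff k).natAbs) *
          heightM (X 1 * pderiv 1 G) := by
        rw [etld_eq]
        exact (heightM_add_le _ _).trans (Nat.add_le_add_left (heightM_aeval_X_mul_le _ _ _) _)
    _ ≤ degreeOf 0 G * heightM G + h.natDegree ^ 2 * heightP h * (degreeOf 1 G * heightM G) := by
        gcongr
        · exact heightM_pderiv_le 0 G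
        · exact sum_natAbs_coeff_derivative_le h
        · exact heightM_X_mul_pderiv_le 1 G
    _ = heightM G * (degreeOf 0 G + degreeOf 1 G * h.natDegree ^ 2 * heightP h) := by ring

theorem stmt_11 (G : MvPolynomial (Fin 2) ℤ) (h : Polynomial ℤ) :
    (∀ x : ℝ,
      HasDerivAt (fun t => MvPolynomial.aeval ![t, Real.exp (Polynomial.aeval t h)] G)
        (MvPolynomial.aeval ![x, Real.exp (Polynomial.aeval x h)] (etld h G)) x) ∧
    MvPolynomial.degreeOf 0 (etld h G) ≤ h.natDegree - 1 + MvPolynomial.degreeOf 0 G ∧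
    MvPolynomial.degreeOf 1 (etld h G) ≤ MvPolynomial.degreeOf 1 G ∧
    heightM (etld h G) ≤ heightM G *
      (MvPolynomial.degreeOf 0 G +
        MvPolynomial.degreeOf 1 G * h.natDegree ^ 2 * heightP h) :=
  ⟨hasDerivAt_aeval_etld h G, degreeOf_zero_etld_le h G, degreeOf_one_etld_le h G,
    heightM_etld_le h G⟩
end

section
/- Let f(x) = F(x, e^{h(x)}) be an E-polynomial with F ∈ ℤ[X,Y], deg F ≤ d, h ∈ ℤ[X] of degree δ > 0, and H(F), H(h) ≤ H. If f is not identically zero, then every real zero α of f satisfies |α| ≤ 1 + (d+1)H² · max{ (d+1)(1+2H²), 2·⌊2d/δ + 1⌋! }. -/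
open Finset
open scoped Nat Polynomial

theorem abs_coeff_le_of_heightP_le {p : ℤ[X]} {H : ℕ} (hH : heightP p ≤ H) (i : ℕ) :
    |p.coeff i| ≤ H := by
  by_cases hi : i ∈ p.support
  · rw [Int.abs_eq_natAbs, Nat.cast_le]
    exact (le_sup (f := fun i => (p.coeff i).natAbs) hi).trans hH
  · simp [Polynomial.notMem_support_iff.1 hi]

theorem abs_coeff_le_of_heightM_le {F : MvPolynomial (Fin 2) ℤ} {H : ℕ} (hH : heightM F ≤ H)
    (m : Fin 2 →₀ ℕ) : |F.coeff m| ≤ H := by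
  by_cases hm : m ∈ F.support
  · rw [Int.abs_eq_natAbs, Nat.cast_le]
    exact (le_sup (f := fun m => (F.coeff m).natAbs) hm).trans hH
  · simp [MvPolynomial.notMem_support_iff.1 hm]

theorem one_le_heightP {p : ℤ[X]} (hp : p ≠ 0) : 1 ≤ heightP p := by
  have := (Int.one_le_abs (Polynomial.leadingCoeff_ne_zero.2 hp)).trans
    (abs_coeff_le_of_heightP_le le_rfl p.natDegree)
  exact_mod_cast this

theorem Polynomial.aeval_int_eq_sum_support (p : ℤ[X]) (x : ℝ) :
    aeval x p = ∑ i ∈ p.support, (p.coeff i : ℝ) * x ^ i := by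
  simp [aeval_def, eval₂_eq_sum, Polynomial.sum_def]

theorem Polynomial.sup_support_eq_natDegree {R : Type*} [Semiring R] {p : R[X]} (hp : p ≠ 0) :
    p.support.sup id = p.natDegree :=
  le_antisymm (Finset.sup_le fun i hi => le_natDegree_of_mem_supp i hi)
    (le_sup (f := id) (natDegree_mem_support_of_nonzero hp))

theorem MvPolynomial.aeval_fin_two_eq_sum (F : MvPolynomial (Fin 2) ℤ) (x y : ℝ) :
    aeval ![x, y] F = ∑ m ∈ F.support, ((F.coeff m : ℤ) : ℝ) * x ^ m 0 * y ^ m 1 := by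
  rw [aeval_def, eval₂_eq']
  simp [Fin.prod_univ_two, mul_assoc]

theorem MvPolynomial.le_totalDegree_of_mem_support {σ R : Type*} [CommSemiring R]
    {F : MvPolynomial σ R} {m : σ →₀ ℕ} (hm : m ∈ F.support) (i : σ) : m i ≤ F.totalDegree :=
  (Finsupp.le_degree i m).trans (le_totalDegree hm)

theorem MvPolynomial.card_support_le_of_totalDegree_le {σ R : Type*} [Fintype σ] [CommSemiring R]
    {F : MvPolynomial σ R} {d : ℕ} (hd : F.totalDegree ≤ d) :
    #F.support ≤ (d + 1) ^ Fintype.card σ := by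
  classical
  calc #F.support ≤ #(Fintype.piFinset fun _ : σ => range (d + 1)) :=
        card_le_card_of_injOn (fun m => ⇑m)
          (fun m hm => Fintype.mem_piFinset.2 fun i =>
            mem_range.2 (Nat.lt_succ_of_le ((le_totalDegree_of_mem_support hm i).trans hd)))
          fun _ _ _ _ h => DFunLike.coe_injective h
    _ = (d + 1) ^ Fintype.card σ := by simp

theorem sum_pow_le_geom_sum {ι : Type*} [DecidableEq ι] {T : Finset ι} {e : ι → ℕ}
    (he : Set.InjOn e T) {N : ℕ} (hN : ∀ i ∈ T, e i < N) {x : ℝ} (hx : 0 ≤ x) :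
    ∑ i ∈ T, x ^ e i ≤ ∑ k ∈ range N, x ^ k := by
  rw [← sum_image he]
  exact sum_le_sum_of_subset_of_nonneg (image_subset_iff.2 fun i hi => mem_range.2 (hN i hi))
    fun _ _ _ => by positivity

theorem le_abs_sum_intCast_mul_pow {ι : Type*} {S : Finset ι} (hS : S.Nonempty) {e : ι → ℕ}
    (he : Set.InjOn e S) {c : ι → ℤ} {H : ℕ} (hc : ∀ i ∈ S, c i ≠ 0) (hcH : ∀ i ∈ S, |c i| ≤ H)
    {α : ℝ} (hα : 1 + 4 * H ≤ |α|) :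
    3 / 4 * |α| ^ S.sup e ≤ |∑ i ∈ S, (c i : ℝ) * α ^ e i| := by
  classical
  obtain ⟨i₀, hi₀, hsup⟩ := exists_mem_eq_sup S hS e
  have hlead : |α| ^ e i₀ ≤ |(c i₀ : ℝ) * α ^ e i₀| := by
    rw [abs_mul, abs_pow]
    exact le_mul_of_one_le_left (by positivity) (by exact_mod_cast Int.one_le_abs (hc i₀ hi₀))
  have hlower : ∀ i ∈ S.erase i₀, e i < e i₀ := fun i hi =>
    (hsup ▸ le_sup (mem_of_mem_erase hi)).lt_of_ne
      fun h => ne_of_mem_erase hi (he (mem_of_mem_erase hi) hi₀ h)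
  have htail : |∑ i ∈ S.erase i₀, (c i : ℝ) * α ^ e i| ≤ H * ∑ k ∈ range (e i₀), |α| ^ k :=
    calc |∑ i ∈ S.erase i₀, (c i : ℝ) * α ^ e i|
        ≤ ∑ i ∈ S.erase i₀, H * |α| ^ e i := by
          refine (abs_sum_le_sum_abs _ _).trans (sum_le_sum fun i hi => ?_)
          rw [abs_mul, abs_pow]
          gcongr
          exact_mod_cast hcH i (mem_of_mem_erase hi)
      _ ≤ H * ∑ k ∈ range (e i₀), |α| ^ k := by
          rw [← mul_sum]
          gcongr
          exact sum_pow_le_geom_sum (he.mono (erase_subset _ _)) hlower (abs_nonneg α)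
  -- `4 H ∑_{k < n} |α|^k ≤ (|α| - 1) ∑_{k < n} |α|^k = |α|^n - 1`
  have hgeom := geom_sum_mul |α| (e i₀)
  have hgeom_nonneg : 0 ≤ ∑ k ∈ range (e i₀), |α| ^ k := by positivity
  rw [hsup, ← add_sum_erase S _ hi₀]
  have := abs_sub_abs_le_abs_sub ((c i₀ : ℝ) * α ^ e i₀) (-∑ i ∈ S.erase i₀, (c i : ℝ) * α ^ e i)
  rw [sub_neg_eq_add, abs_neg] at this
  nlinarith

theorem le_abs_aeval {p : ℤ[X]} (hp : p ≠ 0) {H : ℕ} (hH : heightP p ≤ H) {α : ℝ}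
    (hα : 1 + 4 * H ≤ |α|) : 3 / 4 * |α| ^ p.natDegree ≤ |Polynomial.aeval α p| := by
  rw [Polynomial.aeval_int_eq_sum_support, ← Polynomial.sup_support_eq_natDegree hp]
  exact le_abs_sum_intCast_mul_pow (e := id) (Polynomial.nonempty_support_iff.2 hp)
    (Set.injOn_id _) (fun i hi => Polynomial.mem_support_iff.1 hi)
    (fun i _ => abs_coeff_le_of_heightP_le hH i) hα

theorem two_pow_le_two_mul_factorial (k : ℕ) : 2 ^ k ≤ 2 * k ! := by
  rcases k with _ | k
  · simp
  · simpa [pow_succ, mul_comm, add_comm] using Nat.mul_le_mul_right 2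
      (Nat.factorial_mul_pow_le_factorial (m := 1) (n := k))

theorem mul_pow_le_exp {d δ H : ℕ} (hδ : 0 < δ) (hd : 1 ≤ d) (hH : 1 ≤ H) {x s : ℝ}
    (hx : 2 * (d + 1) * H ^ 2 * ((2 * d / δ + 1) ! : ℕ) ≤ x) (hs : x ^ δ / 2 ≤ s) :
    2 * (d + 1) ^ 2 * H * x ^ d ≤ Real.exp s := by
  set k := 2 * d / δ + 1
  have hdeg : 2 * d + 1 ≤ δ * k := Nat.lt_mul_div_succ _ hδ
  have hK : (1 : ℝ) ≤ k ! := by exact_mod_cast Nat.one_le_iff_ne_zero.2 k.factorial_ne_zero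
  have hPK : (2 : ℝ) ^ k ≤ 2 * k ! := by exact_mod_cast two_pow_le_two_mul_factorial k
  have hH1 : (1 : ℝ) ≤ H := by exact_mod_cast hH
  have hx1 : 1 ≤ x := le_trans (one_le_mul_of_one_le_of_one_le (one_le_mul_of_one_le_of_one_le
    (by linarith) (one_le_pow₀ hH1)) hK) hx
  have hsq : 2 * (d + 1) ^ 2 * H * ((2 : ℝ) ^ k * k !) ≤ x ^ (d + 1) :=
    calc 2 * (d + 1) ^ 2 * H * ((2 : ℝ) ^ k * k !)
        ≤ (2 : ℝ) * (d + 1) ^ 2 * H * (2 * k ! * k !) := by gcongr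
      _ ≤ (2 : ℝ) * (d + 1) ^ 2 * H * (2 * k ! * k !) * H ^ 3 :=
          le_mul_of_one_le_right (by positivity) (one_le_pow₀ hH1)
      _ = (2 * (d + 1) * H ^ 2 * k ! : ℝ) ^ 2 := by ring
      _ ≤ x ^ 2 := by gcongr
      _ ≤ x ^ (d + 1) := pow_le_pow_right₀ hx1 (by omega)
  have hpos : (0 : ℝ) < 2 ^ k * k ! := by positivity
  calc 2 * (d + 1) ^ 2 * H * x ^ d ≤ x ^ (2 * d + 1) / (2 ^ k * k !) := by
        rw [le_div_iff₀ hpos, show x ^ (2 * d + 1) = x ^ d * x ^ (d + 1) by ring]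
        nlinarith [pow_pos (zero_lt_one.trans_le hx1) d]
    _ ≤ x ^ (δ * k) / (2 ^ k * k !) := by gcongr
    _ = (x ^ δ / 2) ^ k / k ! := by rw [div_pow, ← pow_mul, div_div]
    _ ≤ Real.exp (x ^ δ / 2) := Real.pow_div_factorial_le_exp _ (by positivity) k
    _ ≤ Real.exp s := Real.exp_le_exp.2 hs

theorem mul_add_abs_le_of_ne {a b : ℕ} (hab : a ≠ b) {t : ℝ} (h : a * t ≤ b * t) :
    a * t + |t| ≤ b * t := by
  rcases hab.lt_or_gt with hlt | hlt
  · have hlt' : (a : ℝ) + 1 ≤ b := by exact_mod_cast hlt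
    have ht : 0 ≤ t := by nlinarith
    rw [abs_of_nonneg ht]
    nlinarith
  · have hlt' : (b : ℝ) + 1 ≤ a := by exact_mod_cast hlt
    have ht : t ≤ 0 := by nlinarith
    rw [abs_of_nonpos ht]
    nlinarith

theorem aeval_exp_ne_zero {F : MvPolynomial (Fin 2) ℤ} (hF : F ≠ 0) {d H : ℕ}
    (hd : F.totalDegree ≤ d) (hH : heightM F ≤ H) {α t : ℝ} (hα : 1 + 4 * H ≤ |α|)
    (ht : 2 * (d + 1) ^ 2 * H * |α| ^ d ≤ Real.exp |t|) :
    MvPolynomial.aeval ![α, Real.exp t] F ≠ 0 := by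
  classical
  set S := F.support
  set c : (Fin 2 →₀ ℕ) → ℝ := fun m => ((F.coeff m : ℤ) : ℝ)
  have hx : 1 ≤ |α| := by linarith [(Nat.cast_nonneg H : (0 : ℝ) ≤ H)]
  obtain ⟨m₀, hm₀, hmax⟩ := S.exists_max_image (fun m => (m 1 : ℝ) * t)
    (MvPolynomial.support_nonempty.2 hF)
  set J := m₀ 1
  set E := Real.exp (J * t)
  have hfiber : 3 / 4 ≤ |∑ m ∈ S with m 1 = J, c m * α ^ m 0| :=
    le_trans (le_mul_of_one_le_right (by norm_num) (one_le_pow₀ hx)) <|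
      le_abs_sum_intCast_mul_pow (S := {m ∈ S | m 1 = J}) ⟨m₀, mem_filter.2 ⟨hm₀, rfl⟩⟩
        (fun m hm m' hm' h => Finsupp.ext <| Fin.forall_fin_two.2
          ⟨h, (mem_filter.1 hm).2.trans (mem_filter.1 hm').2.symm⟩)
        (fun m hm => MvPolynomial.mem_support_iff.1 (mem_filter.1 hm).1)
        (fun m _ => abs_coeff_le_of_heightM_le hH m) hα
  have hterm : ∀ m ∈ S, m 1 ≠ J → |c m * α ^ m 0 * Real.exp t ^ m 1|
      ≤ H * |α| ^ d * (E / Real.exp |t|) := by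
    intro m hmS hmJ
    rw [abs_mul, abs_mul, abs_pow, ← Real.exp_nat_mul, Real.abs_exp, ← Real.exp_sub]
    gcongr
    · show |((F.coeff m : ℤ) : ℝ)| ≤ H
      exact_mod_cast abs_coeff_le_of_heightM_le hH m
    · exact (MvPolynomial.le_totalDegree_of_mem_support hmS 0).trans hd
    · linarith [mul_add_abs_le_of_ne hmJ (hmax m hmS)]
  have hcard : (#{m ∈ S | m 1 ≠ J} : ℝ) ≤ (d + 1) ^ 2 := by
    exact_mod_cast (card_filter_le _ _).trans (MvPolynomial.card_support_le_of_totalDegree_le hd)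
  have hrest : |∑ m ∈ S with m 1 ≠ J, c m * α ^ m 0 * Real.exp t ^ m 1| ≤ E / 2 :=
    calc |∑ m ∈ S with m 1 ≠ J, c m * α ^ m 0 * Real.exp t ^ m 1|
        ≤ #{m ∈ S | m 1 ≠ J} • (H * |α| ^ d * (E / Real.exp |t|)) :=
          (abs_sum_le_sum_abs _ _).trans <| sum_le_card_nsmul _ _ _ fun m hm =>
            hterm m (mem_filter.1 hm).1 (mem_filter.1 hm).2
      _ ≤ (d + 1) ^ 2 * (H * |α| ^ d * (E / Real.exp |t|)) := by
          rw [nsmul_eq_mul]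
          gcongr
      _ = 2 * (d + 1) ^ 2 * H * |α| ^ d * (E / Real.exp |t|) / 2 := by ring
      _ ≤ Real.exp |t| * (E / Real.exp |t|) / 2 := by gcongr
      _ = E / 2 := by field_simp
  have hsplit : MvPolynomial.aeval ![α, Real.exp t] F
      = (∑ m ∈ S with m 1 = J, c m * α ^ m 0) * E
        + ∑ m ∈ S with m 1 ≠ J, c m * α ^ m 0 * Real.exp t ^ m 1 := by
    rw [MvPolynomial.aeval_fin_two_eq_sum, ← sum_filter_add_sum_filter_not S (fun m => m 1 = J),
      sum_mul]
    congr 1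
    refine sum_congr rfl fun m hm => ?_
    rw [(mem_filter.1 hm).2, ← Real.exp_nat_mul]
  have hE : 0 < E := Real.exp_pos _
  rw [hsplit]
  intro h0
  have := abs_sub_abs_le_abs_sub ((∑ m ∈ S with m 1 = J, c m * α ^ m 0) * E)
    (-∑ m ∈ S with m 1 ≠ J, c m * α ^ m 0 * Real.exp t ^ m 1)
  rw [sub_neg_eq_add, h0, abs_neg, abs_mul, abs_of_pos hE, abs_zero] at this
  nlinarith

def rootBound (d δ H : ℕ) : ℕ :=
  (d + 1) * H ^ 2 * max ((d + 1) * (1 + 2 * H ^ 2)) (2 * (2 * d / δ + 1)!)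

theorem four_mul_le_rootBound {d : ℕ} (δ H : ℕ) (hd : 1 ≤ d) :
    (4 * H : ℝ) ≤ rootBound d δ H := by
  have : 4 * H ≤ (d + 1) * H ^ 2 * ((d + 1) * (1 + 2 * H ^ 2)) :=
    calc 4 * H = 2 * H * (2 * 1) := by ring
      _ ≤ (d + 1) * H ^ 2 * ((d + 1) * (1 + 2 * H ^ 2)) := by
        gcongr
        all_goals first | omega | exact Nat.le_self_pow two_ne_zero H
  exact_mod_cast this.trans (Nat.mul_le_mul_left _ (le_max_left _ _))

theorem two_mul_factorial_le_rootBound (d δ H : ℕ) :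
    2 * (d + 1) * H ^ 2 * ((2 * d / δ + 1)! : ℕ) ≤ (rootBound d δ H : ℝ) := by
  exact_mod_cast le_of_eq_of_le (by ring) (Nat.mul_le_mul_left _ (le_max_right _ _))

theorem stmt_14 (F : MvPolynomial (Fin 2) ℤ) (h : Polynomial ℤ) (d δ H : ℕ)
    (hd : F.totalDegree ≤ d) (hδ : h.natDegree = δ) (hδ0 : 0 < δ)
    (hHF : heightM F ≤ H) (hHh : heightP h ≤ H)
    (f : ℝ → ℝ)
    (hf : f = fun x => MvPolynomial.aeval ![x, Real.exp (Polynomial.aeval x h)] F)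
    (hfne : ∃ x : ℝ, f x ≠ 0) :
    ∀ α : ℝ, f α = 0 →
      |α| ≤ 1 + (((d + 1) * H ^ 2 *
        max ((d + 1) * (1 + 2 * H ^ 2)) (2 * Nat.factorial (2 * d / δ + 1)) : ℕ) : ℝ) := by
  intro α hα
  subst hf
  have hF : F ≠ 0 := by
    rintro rfl
    simp at hfne
  by_contra! hgt
  change 1 + (rootBound d δ H : ℝ) < |α| at hgt
  rcases Nat.eq_zero_or_pos d with rfl | hd1
  · obtain ⟨c, rfl⟩ : ∃ c, F = MvPolynomial.C c :=
      ⟨_, MvPolynomial.totalDegree_eq_zero_iff_eq_C.1 (Nat.le_zero.1 hd)⟩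
    simp_all
  have hh : h ≠ 0 := Polynomial.ne_zero_of_natDegree_gt (hδ ▸ hδ0)
  have hH : 1 ≤ H := (one_le_heightP hh).trans hHh
  have hx₁ : 1 + 4 * (H : ℝ) ≤ |α| := by linarith [four_mul_le_rootBound δ H hd1]
  have hx₂ := (two_mul_factorial_le_rootBound d δ H).trans (by linarith : _ ≤ |α|)
  have ht : |α| ^ δ / 2 ≤ |Polynomial.aeval α h| := by
    have := le_abs_aeval hh hHh hx₁
    rw [hδ] at this
    linarith [pow_nonneg (abs_nonneg α) δ]
  exact aeval_exp_ne_zero hF hd hHF hx₁ (mul_pow_le_exp hδ0 hd1 hH hx₂ ht) hα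
end

section
/- Let p ∈ ℤ[X] be a real polynomial and α₁ < α₂ two distinct real roots of p. Then the Thom encodings of α₁ and α₂, i.e., the sign sequences (sign p'(α_i), …, sign p^{(deg p)}(α_i)), are distinct. -/
/-!
If every derivative `q⁽ᵏ⁾` (`k ≥ 0`) takes the same sign at `a < b`, then by downward induction on `k`
each `q⁽ᵏ⁾` has constant sign on `[a, b]`: the sign of `q⁽ᵏ⁺¹⁾` being constant makes `q⁽ᵏ⁾` monotone or
antitone there, so `q⁽ᵏ⁾(x)` lies between `q⁽ᵏ⁾(a)` and `q⁽ᵏ⁾(b)`, which have the same sign. Applied to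
`k = 0` for two roots `a < b` with the same Thom encoding, `p` vanishes on all of `[a, b]`, hence `p = 0`.
-/

open Polynomial Set

namespace Real

theorem sign_mono : Monotone Real.sign := by
  intro x y hxy
  unfold Real.sign
  split_ifs <;> linarith

theorem sign_nonneg_iff {r : ℝ} : 0 ≤ Real.sign r ↔ 0 ≤ r := by
  unfold Real.sign
  split_ifs <;> constructor <;> intro <;> linarith

theorem sign_nonpos_iff {r : ℝ} : Real.sign r ≤ 0 ↔ r ≤ 0 := by
  unfold Real.sign
  split_ifs <;> constructor <;> intro <;> linarith

theorem sign_eq_of_mem_uIcc {x y z : ℝ} (hxz : Real.sign x = Real.sign z) (hy : y ∈ uIcc x z) :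
    Real.sign y = Real.sign x := by
  rcases mem_uIcc.mp hy with ⟨hxy, hyz⟩ | ⟨hzy, hyx⟩
  · exact le_antisymm (hxz ▸ sign_mono hyz) (sign_mono hxy)
  · exact le_antisymm (sign_mono hyx) (hxz ▸ sign_mono hzy)

end Real

namespace Polynomial

theorem eval_mem_uIcc_of_sign_derivative_eq {q : ℝ[X]} {a b x : ℝ} (hx : x ∈ Icc a b)
    (hq' : ∀ y ∈ Icc a b, Real.sign ((derivative q).eval y) = Real.sign ((derivative q).eval a)) :
    q.eval x ∈ uIcc (q.eval a) (q.eval b) := by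
  have hab : a ≤ b := hx.1.trans hx.2
  have ha : a ∈ Icc a b := left_mem_Icc.mpr hab
  have hb : b ∈ Icc a b := right_mem_Icc.mpr hab
  have hcont : ContinuousOn (fun y => q.eval y) (Icc a b) := q.continuous.continuousOn
  rcases le_total 0 ((derivative q).eval a) with hpos | hneg
  · have hmono : MonotoneOn (fun y => q.eval y) (Icc a b) :=
      monotoneOn_of_deriv_nonneg (convex_Icc a b) hcont q.differentiable.differentiableOn
        fun y hy => by
          rw [Polynomial.deriv, ← Real.sign_nonneg_iff, hq' y (interior_subset hy)]
          exact Real.sign_nonneg_iff.mpr hpos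
    exact Icc_subset_uIcc ⟨hmono ha hx hx.1, hmono hx hb hx.2⟩
  · have hanti : AntitoneOn (fun y => q.eval y) (Icc a b) :=
      antitoneOn_of_deriv_nonpos (convex_Icc a b) hcont q.differentiable.differentiableOn
        fun y hy => by
          rw [Polynomial.deriv, ← Real.sign_nonpos_iff, hq' y (interior_subset hy)]
          exact Real.sign_nonpos_iff.mpr hneg
    exact Icc_subset_uIcc' ⟨hanti hx hb hx.2, hanti ha hx hx.1⟩

theorem sign_eval_eq_on_Icc_of_sign_iterate_derivative_eq {q : ℝ[X]} {a b : ℝ}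
    (h : ∀ k, Real.sign ((derivative^[k] q).eval a) = Real.sign ((derivative^[k] q).eval b)) :
    ∀ x ∈ Icc a b, Real.sign (q.eval x) = Real.sign (q.eval a) := by
  obtain ⟨n, hn⟩ : ∃ n, derivative^[n] q = 0 :=
    ⟨_, iterate_derivative_eq_zero q.natDegree.lt_succ_self⟩
  induction n generalizing q with
  | zero =>
    subst hn
    intro x _
    rw [eval_zero, eval_zero]
  | succ n ih =>
    intro x hx
    have hq' := ih (fun k => h (k + 1)) (by rwa [← Function.iterate_succ_apply])
    exact Real.sign_eq_of_mem_uIcc (h 0) (eval_mem_uIcc_of_sign_derivative_eq hx hq')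

end Polynomial

theorem stmt_16 (p : Polynomial ℤ) (hp : p ≠ 0) (α₁ α₂ : ℝ)
    (h1 : Polynomial.aeval α₁ p = 0) (h2 : Polynomial.aeval α₂ p = 0) (hlt : α₁ < α₂) :
    ∃ k ∈ Finset.Icc 1 p.natDegree,
      Real.sign (Polynomial.aeval α₁ (Polynomial.derivative^[k] p)) ≠
        Real.sign (Polynomial.aeval α₂ (Polynomial.derivative^[k] p)) := by
  by_contra! hcon
  set q : ℝ[X] := p.map (Int.castRingHom ℝ)
  have heval (k : ℕ) (x : ℝ) : (derivative^[k] q).eval x = aeval x (derivative^[k] p) := by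
    rw [iterate_derivative_map, eval_map, aeval_def]
    rfl
  have heval0 (x : ℝ) : q.eval x = aeval x p := heval 0 x
  have hsign (k : ℕ) : Real.sign ((derivative^[k] q).eval α₁) =
      Real.sign ((derivative^[k] q).eval α₂) := by
    rw [heval, heval]
    rcases Nat.eq_zero_or_pos k with rfl | hk
    · rw [Function.iterate_zero_apply, h1, h2]
    rcases le_or_gt k p.natDegree with hkd | hkd
    · exact hcon k (Finset.mem_Icc.mpr ⟨hk, hkd⟩)
    · rw [iterate_derivative_eq_zero hkd, map_zero, map_zero]
  have hq0 : ∀ x ∈ Icc α₁ α₂, q.IsRoot x := fun x hx => by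
    have := sign_eval_eq_on_Icc_of_sign_iterate_derivative_eq hsign x hx
    rw [IsRoot.def, heval0]
    rwa [heval0, heval0, h1, Real.sign_zero, Real.sign_eq_zero_iff] at this
  refine hp (map_injective _ (Int.castRingHom ℝ).injective_int ?_)
  rw [Polynomial.map_zero]
  exact eq_zero_of_infinite_isRoot q ((Icc_infinite hlt).mono hq0)
end
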